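/- arXiv:1611.09637 — 5 statements merged into one kernel-verified Lean document; each statement's English description precedes it below -/
import Mathlib

section
/- For any connected graph G, the partition dimension of G is at most the metric dimension of G plus one. -/
open Configuration

/-- The incidence (Levi) graph of a point-line geometry. -/
def incGraph (P L : Type*) [Membership P L] : SimpleGraph (P ⊕ L) where
  Adj x y := match x, y with
    | Sum.inl p, Sum.inr l => p ∈ l
    | Sum.inr l, Sum.inl p => p ∈ l
    | _, _ => False
  symm := by constructor; rintro (p | l) (p' | l') h <;> simp_all
  loopless := by constructor; rintro (p | l) h <;> simp_all

/-- Distance from a vertex to a set of vertices (minimum distance to an element). -/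
noncomputable def setDist {V : Type*} (G : SimpleGraph V) (v : V) (S : Set V) : ℕ :=
  sInf (G.dist v '' S)

/-- An indexed family of sets is a resolving partition of the vertex set of `G`:
the classes are nonempty, pairwise disjoint, cover `V`, and the distance vectors
`i ↦ d(v, S i)` are pairwise distinct. -/
def IsResolvingPartition {V ι : Type*} (G : SimpleGraph V) (S : ι → Set V) : Prop :=
  (∀ i, (S i).Nonempty) ∧ (Pairwise fun i j => Disjoint (S i) (S j)) ∧
    (⋃ i, S i) = Set.univ ∧
    ∀ u v : V, (∀ i, setDist G u (S i) = setDist G v (S i)) → u = v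

/-- The partition dimension of a graph. -/
noncomputable def partitionDim {V : Type*} (G : SimpleGraph V) : ℕ :=
  sInf {k | ∃ S : Fin k → Set V, IsResolvingPartition G S}

/-- A set of vertices is a resolving set for `G`. -/
def IsResolvingSet {V : Type*} (G : SimpleGraph V) (W : Set V) : Prop :=
  ∀ u v : V, (∀ w ∈ W, G.dist u w = G.dist v w) → u = v

/-- The metric dimension of a graph. -/
noncomputable def metricDim {V : Type*} (G : SimpleGraph V) : ℕ :=
  sInf {k | ∃ W : Set V, W.ncard = k ∧ IsResolvingSet G W}

/-!
Let `W` be a resolving set of minimum size. If `W` is not all of `V`, the singletons `{w}`,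
`w ∈ W`, together with `V \ W` form a resolving partition, because `d(v, {w}) = d(v, w)`. If
`W = V`, then in a connected graph `V \ {x}` is also resolving and the same construction applies.
-/

section

variable {V : Type*} (G : SimpleGraph V)

theorem setDist_singleton (u w : V) : setDist G u {w} = G.dist u w := by
  simp [setDist]

theorem IsResolvingPartition.comp_equiv {ι κ : Type*} {S : ι → Set V}
    (hS : IsResolvingPartition G S) (e : κ ≃ ι) : IsResolvingPartition G (S ∘ e) := by
  obtain ⟨hne, hdisj, hcover, hres⟩ := hS
  refine ⟨fun i => hne (e i), fun i j hij => hdisj (e.injective.ne hij), ?_, ?_⟩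
  · rw [← hcover]
    exact e.surjective.iUnion_comp S
  · exact fun u v huv => hres u v fun i => by simpa using huv (e.symm i)

theorem partitionDim_le_natCard {ι : Type*} [Finite ι] {S : ι → Set V}
    (hS : IsResolvingPartition G S) : partitionDim G ≤ Nat.card ι :=
  Nat.sInf_le ⟨_, hS.comp_equiv G (Finite.equivFin ι).symm⟩

def complSingletonsPartition (W : Set V) : Option W → Set V :=
  fun o => o.elim Wᶜ fun w => {(w : V)}

variable {G}

theorem IsResolvingSet.isResolvingPartition_complSingletonsPartition {W : Set V}
    (hW : IsResolvingSet G W) (hWc : Wᶜ.Nonempty) :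
    IsResolvingPartition G (complSingletonsPartition W) := by
  refine ⟨?_, ?_, ?_, ?_⟩
  · rintro (_ | w)
    exacts [hWc, Set.singleton_nonempty _]
  · rintro (_ | ⟨w, hw⟩) (_ | ⟨w', hw'⟩) hne
    · exact absurd rfl hne
    · simpa [complSingletonsPartition] using hw'
    · simpa [complSingletonsPartition] using hw
    · simpa [complSingletonsPartition] using fun h => hne (by subst h; rfl)
  · refine Set.eq_univ_of_forall fun x => Set.mem_iUnion.mpr ?_
    by_cases hx : x ∈ W
    exacts [⟨some ⟨x, hx⟩, rfl⟩, ⟨none, hx⟩]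
  · intro u v huv
    refine hW u v fun w hw => ?_
    simpa [complSingletonsPartition, setDist_singleton] using huv (some ⟨w, hw⟩)

theorem SimpleGraph.Connected.isResolvingSet_univ (hG : G.Connected) :
    IsResolvingSet G Set.univ :=
  fun u v h => hG.dist_eq_zero_iff.mp (by simpa using h v trivial)

theorem SimpleGraph.Connected.isResolvingSet_compl_singleton (hG : G.Connected) (x : V) :
    IsResolvingSet G {x}ᶜ := by
  intro u v h
  by_contra huv
  obtain hu | hv : u ≠ x ∨ v ≠ x := by
    by_contra! hx
    exact huv (hx.1.trans hx.2.symm)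
  · exact huv (hG.dist_eq_zero_iff.mp ((h u hu).symm.trans G.dist_self)).symm
  · exact huv (hG.dist_eq_zero_iff.mp ((h v hv).trans G.dist_self))

theorem IsResolvingSet.partitionDim_le_ncard_add_one [Finite V] {W : Set V}
    (hW : IsResolvingSet G W) (hWc : Wᶜ.Nonempty) : partitionDim G ≤ W.ncard + 1 := by
  have := partitionDim_le_natCard G (hW.isResolvingPartition_complSingletonsPartition hWc)
  rwa [Finite.card_option, Nat.card_coe_set_eq] at this

theorem SimpleGraph.Connected.partitionDim_le_ncard_add_one [Finite V] (hG : G.Connected)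
    {W : Set V} (hW : IsResolvingSet G W) : partitionDim G ≤ W.ncard + 1 := by
  rcases Wᶜ.eq_empty_or_nonempty with hWc | hWc
  · obtain ⟨x⟩ := hG.nonempty
    calc partitionDim G ≤ ({x}ᶜ : Set V).ncard + 1 :=
          (hG.isResolvingSet_compl_singleton x).partitionDim_le_ncard_add_one (by simp)
      _ ≤ W.ncard + 1 := by
          rw [Set.compl_empty_iff.mp hWc]
          exact Nat.add_le_add_right (Set.ncard_le_ncard (Set.subset_univ _)) 1
  · exact hW.partitionDim_le_ncard_add_one hWc

end

/-- The partition dimension of a connected graph is at most its metric dimension plus one. -/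
theorem pd_le_metricDim_add_one {V : Type*} [Fintype V] (G : SimpleGraph V)
    (hG : G.Connected) : partitionDim G ≤ metricDim G + 1 := by
  obtain ⟨W, hWcard, hW⟩ := Nat.sInf_mem
    (⟨_, Set.univ, rfl, hG.isResolvingSet_univ⟩ :
      {k | ∃ W : Set V, W.ncard = k ∧ IsResolvingSet G W}.Nonempty)
  rw [metricDim, ← hWcard]
  exact hG.partitionDim_le_ncard_add_one hW
end

section
/- Suppose the incidence graph of a projective plane of order q has a resolving partition with r point-only classes, s line-only classes, and t mixed classes. Then (r+t)·2^{s+t-1} ≥ q²+q+1. -/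
open Configuration

/-! In the incidence graph of a projective plane, a point `p` is at distance 2 from every other
point and at distance 1 or 3 from a line according as it lies on it or not. Hence its distance to
a class not containing it is 1 if the class holds a line through `p`, and otherwise does not
depend on `p`. Two points of the same class are therefore separated only by the set of classes
holding a line through them; any two points share a line, so these sets form an intersecting
family on the `s + t` classes containing lines, of size at most `2 ^ (s + t - 1)`. The
`q ^ 2 + q + 1` points are spread over the `r + t` classes containing points. -/

open SimpleGraph Sum Finset

theorem Set.Intersecting.card_le_two_pow_pred {γ : Type*} [Fintype γ] [DecidableEq γ]
    {s : Finset (Finset γ)} (hs : (s : Set (Finset γ)).Intersecting) :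
    #s ≤ 2 ^ (Fintype.card γ - 1) := by
  have h := hs.card_le
  rw [Fintype.card_finset] at h
  generalize Fintype.card γ = n at h ⊢
  cases n with
  | zero => simp at h ⊢; omega
  | succ n => rw [pow_succ] at h; simp only [Nat.add_sub_cancel]; omega

theorem Fintype.card_le_mul_two_pow_of_intersecting {α β γ : Type*} [Fintype α] [Fintype β]
    [Fintype γ] [DecidableEq β] [DecidableEq γ] (f : α → β) (g : α → Finset γ)
    (hinj : ∀ a b, f a = f b → g a = g b → a = b) (hint : ∀ a b, ¬Disjoint (g a) (g b)) :
    Fintype.card α ≤ Fintype.card β * 2 ^ (Fintype.card γ - 1) := by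
  have hfiber (b : β) : #{a | f a = b} ≤ 2 ^ (Fintype.card γ - 1) := by
    rw [← card_image_of_injOn fun a ha a' ha' => by
      simp only [coe_filter, Set.mem_ofPred_eq, mem_univ, true_and] at ha ha'
      exact hinj a a' (ha.trans ha'.symm)]
    apply Set.Intersecting.card_le_two_pow_pred
    simp only [coe_image, Set.Intersecting, Set.forall_mem_image]
    exact fun a _ b _ => hint a b
  calc Fintype.card α = ∑ b, #{a | f a = b} :=
        card_eq_sum_card_fiberwise fun a _ => mem_univ (f a)
    _ ≤ ∑ _b : β, 2 ^ (Fintype.card γ - 1) := sum_le_sum fun b _ => hfiber b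
    _ = Fintype.card β * 2 ^ (Fintype.card γ - 1) := by simp

theorem SimpleGraph.Coloring.even_dist_iff_congr {V : Type*} {G : SimpleGraph V}
    (c : G.Coloring Bool) {u v : V} (h : G.Reachable u v) :
    Even (G.dist u v) ↔ (c u ↔ c v) := by
  obtain ⟨w, hw⟩ := h.exists_walk_length_eq_dist
  rw [← hw, c.even_length_iff_congr]

theorem setDist_eq_zero_of_mem {V : Type*} (G : SimpleGraph V) {v : V} {T : Set V} (hv : v ∈ T) :
    setDist G v T = 0 :=
  Nat.sInf_eq_zero.mpr (Or.inl ⟨v, hv, G.dist_self⟩)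

theorem setDist_le_setDist {V : Type*} (G : SimpleGraph V) {v w : V} {T : Set V}
    (h : ∀ x ∈ T, ∃ y ∈ T, G.dist v y ≤ G.dist w x) :
    setDist G v T ≤ setDist G w T := by
  rcases (G.dist w '' T).eq_empty_or_nonempty with hT | hT
  · simp [setDist, Set.image_eq_empty.mp hT]
  · obtain ⟨x, hx, hxmin⟩ := Nat.sInf_mem hT
    obtain ⟨y, hy, hyx⟩ := h x hx
    exact (Nat.sInf_le (Set.mem_image_of_mem _ hy)).trans (hyx.trans_eq hxmin)

section IncidenceGraph

variable {P L : Type*} [Membership P L]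

theorem Configuration.ProjectivePlane.exists_line_mem_mem [ProjectivePlane P L] (p p' : P) :
    ∃ l : L, p ∈ l ∧ p' ∈ l := by
  have : Nontrivial P := by
    obtain ⟨-, p₂, p₃, -, -, l₃, -, -, -, -, h₂₃, -, -, h₃₃⟩ :=
      ProjectivePlane.exists_config (P := P) (L := L)
    exact ⟨⟨p₂, p₃, ne_of_mem_of_not_mem h₂₃ h₃₃⟩⟩
  rcases eq_or_ne p p' with rfl | hpp'
  · obtain ⟨x, hx⟩ := exists_ne p
    exact ⟨_, (HasLines.mkLine_ax hx).2, (HasLines.mkLine_ax hx).2⟩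
  · exact ⟨_, HasLines.mkLine_ax hpp'⟩

@[simp]
theorem incGraph_adj_inl_inr {p : P} {l : L} : (incGraph P L).Adj (inl p) (inr l) ↔ p ∈ l :=
  Iff.rfl

@[simp]
theorem incGraph_adj_inr_inl {p : P} {l : L} : (incGraph P L).Adj (inr l) (inl p) ↔ p ∈ l :=
  Iff.rfl

variable (P L) in
def incGraph.bicoloring : (incGraph P L).Coloring Bool :=
  Coloring.mk Sum.isLeft <| by rintro (p | l) (p' | l') h <;> simp_all [incGraph]

@[simp]
theorem incGraph.bicoloring_apply (x : P ⊕ L) : incGraph.bicoloring P L x = x.isLeft :=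
  rfl

theorem incGraph_dist_inl_inl [HasLines P L] {p p' : P} (h : p ≠ p') :
    (incGraph P L).dist (inl p) (inl p') = 2 := by
  let w : (incGraph P L).Walk (inl p) (inl p') :=
    .cons (incGraph_adj_inl_inr.mpr (HasLines.mkLine_ax h).1)
      (.cons (incGraph_adj_inr_inl.mpr (HasLines.mkLine_ax h).2) .nil)
  have heven := ((incGraph.bicoloring P L).even_dist_iff_congr w.reachable).mpr Iff.rfl
  have hpos := w.reachable.pos_dist_of_ne (by simpa using h)
  have hle := dist_le w
  obtain ⟨k, hk⟩ := heven
  simp only [w, Walk.length_cons, Walk.length_nil] at hle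
  omega

theorem incGraph_dist_inl_inr_of_mem {p : P} {l : L} (h : p ∈ l) :
    (incGraph P L).dist (inl p) (inr l) = 1 :=
  dist_eq_one_iff_adj.mpr h

theorem incGraph_dist_inl_inr_of_not_mem [ProjectivePlane P L] {p : P} {l : L} (h : p ∉ l) :
    (incGraph P L).dist (inl p) (inr l) = 3 := by
  obtain ⟨m, hm, -⟩ := ProjectivePlane.exists_line_mem_mem (L := L) p p
  have hml : m ≠ l := fun e => h (e ▸ hm)
  let w : (incGraph P L).Walk (inl p) (inr l) :=
    .cons (incGraph_adj_inl_inr.mpr hm)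
      (.cons (incGraph_adj_inr_inl.mpr (HasPoints.mkPoint_ax hml).1)
        (.cons (incGraph_adj_inl_inr.mpr (HasPoints.mkPoint_ax hml).2) .nil))
  have hodd := ((incGraph.bicoloring P L).even_dist_iff_congr w.reachable).not.mpr (by simp)
  have hne : (incGraph P L).dist (inl p) (inr l) ≠ 1 := fun h1 => h (dist_eq_one_iff_adj.mp h1)
  have hle := dist_le w
  simp only [w, Walk.length_cons, Walk.length_nil] at hle
  rw [Nat.not_even_iff_odd] at hodd
  obtain ⟨k, hk⟩ := hodd
  omega

theorem incGraph_setDist_inl_le [ProjectivePlane P L] {p p' : P} {T : Set (P ⊕ L)}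
    (hp : inl p ∉ T) (hp' : inl p' ∉ T)
    (h : (∃ l, inr l ∈ T ∧ p' ∈ l) → ∃ l, inr l ∈ T ∧ p ∈ l) :
    setDist (incGraph P L) (inl p) T ≤ setDist (incGraph P L) (inl p') T := by
  refine setDist_le_setDist _ fun x hx => ?_
  rcases x with a | l
  · have hpa : p ≠ a := by rintro rfl; exact hp hx
    have hp'a : p' ≠ a := by rintro rfl; exact hp' hx
    exact ⟨inl a, hx, by rw [incGraph_dist_inl_inl hpa, incGraph_dist_inl_inl hp'a]⟩
  · by_cases hp'l : p' ∈ l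
    · obtain ⟨l', hl', hpl'⟩ := h ⟨l, hx, hp'l⟩
      refine ⟨inr l', hl', ?_⟩
      rw [incGraph_dist_inl_inr_of_mem hpl', incGraph_dist_inl_inr_of_mem hp'l]
    · refine ⟨inr l, hx, ?_⟩
      rw [incGraph_dist_inl_inr_of_not_mem hp'l]
      by_cases hpl : p ∈ l
      · rw [incGraph_dist_inl_inr_of_mem hpl]; omega
      · rw [incGraph_dist_inl_inr_of_not_mem hpl]

theorem IsResolvingPartition.eq_of_mem_of_lines_iff [ProjectivePlane P L] {ι : Type*}
    {S : ι → Set (P ⊕ L)} (hS : IsResolvingPartition (incGraph P L) S) {p p' : P} {i : ι}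
    (hp : inl p ∈ S i) (hp' : inl p' ∈ S i)
    (h : ∀ j, (∃ l, inr l ∈ S j ∧ p ∈ l) ↔ ∃ l, inr l ∈ S j ∧ p' ∈ l) :
    p = p' := by
  refine inl_injective (hS.2.2.2 _ _ fun j => ?_)
  rcases eq_or_ne j i with rfl | hji
  · rw [setDist_eq_zero_of_mem _ hp, setDist_eq_zero_of_mem _ hp']
  · have hpj := Set.disjoint_right.mp (hS.2.1 hji) hp
    have hp'j := Set.disjoint_right.mp (hS.2.1 hji) hp'
    exact (incGraph_setDist_inl_le hpj hp'j (h j).mpr).antisymm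
      (incGraph_setDist_inl_le hp'j hpj (h j).mp)

end IncidenceGraph

theorem resolving_partition_lower_bound_points_general (P L : Type*) [Membership P L] [Fintype P]
    [Fintype L] [ProjectivePlane P L] (q : ℕ) (hq : ProjectivePlane.order P L = q)
    (r s t : ℕ) (S : Fin r ⊕ Fin s ⊕ Fin t → Set (P ⊕ L))
    (hres : IsResolvingPartition (incGraph P L) S)
    (hpt : ∀ i : Fin r, S (Sum.inl i) ⊆ Set.range Sum.inl)
    (hln : ∀ j : Fin s, S (Sum.inr (Sum.inl j)) ⊆ Set.range Sum.inr) :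
    q ^ 2 + q + 1 ≤ (r + t) * 2 ^ (s + t - 1) := by
  classical
  have hclass := Set.iUnion_eq_univ_iff.mp hres.2.2.1
  have hpointClass (p : P) : ∃ c : Fin r ⊕ Fin t, inl p ∈ S (c.elim inl (inr ∘ inr)) := by
    obtain ⟨i | j | m, hi⟩ := hclass (inl p)
    · exact ⟨inl i, hi⟩
    · simpa using hln j hi
    · exact ⟨inr m, hi⟩
  have hnoLine (i : Fin r) (l : L) : inr l ∉ S (inl i) := fun hl => by simpa using hpt i hl
  have hlineClass (l : L) : ∃ j : Fin s ⊕ Fin t, inr l ∈ S (inr j) := by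
    obtain ⟨i | j, hi⟩ := hclass (inr l)
    · exact absurd hi (hnoLine i l)
    · exact ⟨j, hi⟩
  choose cls hcls using hpointClass
  let A (p : P) : Finset (Fin s ⊕ Fin t) := {j | ∃ l, inr l ∈ S (inr j) ∧ p ∈ l}
  have hinj (p p' : P) (hc : cls p = cls p') (hA : A p = A p') : p = p' := by
    refine hres.eq_of_mem_of_lines_iff (hcls p) (hc ▸ hcls p') fun j => ?_
    rcases j with i | j
    · simp [hnoLine]
    · simpa [A] using congrArg (j ∈ ·) hA
  have hint (p p' : P) : ¬Disjoint (A p) (A p') := by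
    obtain ⟨l, hpl, hp'l⟩ := ProjectivePlane.exists_line_mem_mem (L := L) p p'
    obtain ⟨j, hj⟩ := hlineClass l
    exact not_disjoint_iff.mpr
      ⟨j, by simpa [A] using ⟨l, hj, hpl⟩, by simpa [A] using ⟨l, hj, hp'l⟩⟩
  calc q ^ 2 + q + 1 = Fintype.card P := by rw [ProjectivePlane.card_points P L, hq]
    _ ≤ _ := Fintype.card_le_mul_two_pow_of_intersecting cls A hinj hint
    _ = (r + t) * 2 ^ (s + t - 1) := by simp

/-- If the incidence graph of a projective plane of order `q` has a resolving partition
with `r` point-only classes, `s` line-only classes and `t` mixed classes, then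
`(r+t) * 2^(s+t-1) ≥ q² + q + 1`. -/
theorem resolving_partition_lower_bound_points (P L : Type*) [Membership P L] [Fintype P]
    [Fintype L] [ProjectivePlane P L] (q : ℕ) (hq : ProjectivePlane.order P L = q)
    (h2 : 2 ≤ q) (r s t : ℕ) (S : Fin r ⊕ Fin s ⊕ Fin t → Set (P ⊕ L))
    (hres : IsResolvingPartition (incGraph P L) S)
    (hpt : ∀ i : Fin r, S (Sum.inl i) ⊆ Set.range Sum.inl)
    (hln : ∀ j : Fin s, S (Sum.inr (Sum.inl j)) ⊆ Set.range Sum.inr)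
    (hmix : ∀ m : Fin t, (∃ p : P, Sum.inl p ∈ S (Sum.inr (Sum.inr m))) ∧
      (∃ l : L, Sum.inr l ∈ S (Sum.inr (Sum.inr m)))) :
    q ^ 2 + q + 1 ≤ (r + t) * 2 ^ (s + t - 1) :=
  resolving_partition_lower_bound_points_general P L q hq r s t S hres hpt hln
end

section
/- If nonnegative integers r, s, t satisfy (s+t)·2^{r+t-1} ≥ N and (r+t)·2^{s+t-1} ≥ N where N = q²+q+1, then r+s+t ≥ 2·log₂(q) − 2·log₂(log₂(q+2)) − C for some absolute constant C (equivalently, r+s+t ≥ (2+o(1))·log₂ q). In particular, the minimum of r+s+t subject to these constraints is attained at r=s=0, where the constraint becomes t·2^{t-1} ≥ q²+q+1. -/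
open Configuration

open Real

/-
From the first constraint alone, `m = r + s + t` satisfies `q² ≤ m · 2^m`, i.e.
`2 log₂ q ≤ log₂ m + m`. If `m < 2 log₂ q` this gives `m ≥ 2 log₂ q - log₂ (2 log₂ q)`,
and otherwise that bound holds trivially; so `C = 1` works.
-/

lemma le_add_mul_pow_add_of_le_mul_pow_sub {N b r s t : ℕ} (hb : 0 < b)
    (h : N ≤ (s + t) * b ^ (r + t - 1)) : N ≤ (r + s + t) * b ^ (r + s + t) :=
  h.trans <| Nat.mul_le_mul (by omega) (Nat.pow_le_pow_right hb (by omega))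

lemma two_mul_logb_le_logb_add_of_sq_le {x : ℝ} {m : ℕ} (hx : 0 < x)
    (h : x ^ 2 ≤ m * 2 ^ m) : 2 * logb 2 x ≤ logb 2 m + m := by
  have hm : (0 : ℝ) < m := by
    rcases Nat.eq_zero_or_pos m with rfl | hm
    · simp only [Nat.cast_zero, zero_mul] at h
      nlinarith
    · exact_mod_cast hm
  calc 2 * logb 2 x = logb 2 (x ^ 2) := by rw [logb_pow]; norm_num
    _ ≤ logb 2 (m * 2 ^ m) := logb_le_logb_of_le one_lt_two (by positivity) h
    _ = logb 2 m + m := by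
      rw [logb_mul hm.ne' (by positivity), logb_pow, logb_self_eq_one one_lt_two, mul_one]

lemma sub_logb_le_of_le_logb_add {b L m : ℝ} (hb : 1 < b) (hL : 1 ≤ L) (hm : 0 < m)
    (h : L ≤ logb b m + m) : L - logb b L ≤ m := by
  rcases le_or_gt L m with hLm | hmL
  · linarith [logb_nonneg hb hL]
  · linarith [logb_le_logb_of_le hb hm hmL.le]

lemma logb_two_mul_logb_le {x : ℝ} (hx : 1 < x) :
    logb 2 (2 * logb 2 x) ≤ 1 + 2 * logb 2 (logb 2 (x + 2)) := by
  have hlog : 0 < logb 2 x := logb_pos one_lt_two hx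
  have hmono : logb 2 (logb 2 x) ≤ logb 2 (logb 2 (x + 2)) :=
    logb_le_logb_of_le one_lt_two hlog (logb_le_logb_of_le one_lt_two (by linarith) (by linarith))
  have hnonneg : 0 ≤ logb 2 (logb 2 (x + 2)) :=
    logb_nonneg one_lt_two <| (le_logb_iff_rpow_le one_lt_two (by linarith)).2 (by norm_num; linarith)
  rw [logb_mul two_ne_zero hlog.ne', logb_self_eq_one one_lt_two]
  linarith

/-- Numerical optimization underlying the lower bound: there is an absolute constant `C`
such that whenever nonnegative integers `r, s, t` satisfy `(s+t)·2^(r+t-1) ≥ N` and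
`(r+t)·2^(s+t-1) ≥ N` with `N = q²+q+1`, `q ≥ 2`, then
`r+s+t ≥ 2·log₂ q − 2·log₂(log₂(q+2)) − C`. Moreover, at `r = s = 0` both constraints
become `t·2^(t-1) ≥ q²+q+1`. -/
theorem numeric_lower_bound :
    (∃ C : ℝ, 0 ≤ C ∧ ∀ q : ℕ, 2 ≤ q → ∀ r s t : ℕ,
      q ^ 2 + q + 1 ≤ (s + t) * 2 ^ (r + t - 1) →
      q ^ 2 + q + 1 ≤ (r + t) * 2 ^ (s + t - 1) →
      2 * Real.logb 2 q - 2 * Real.logb 2 (Real.logb 2 (q + 2)) - C ≤ (r + s + t : ℝ)) ∧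
    (∀ q t : ℕ, ((q ^ 2 + q + 1 ≤ (0 + t) * 2 ^ (0 + t - 1) ∧
      q ^ 2 + q + 1 ≤ (0 + t) * 2 ^ (0 + t - 1)) ↔ q ^ 2 + q + 1 ≤ t * 2 ^ (t - 1))) := by
  refine ⟨⟨1, zero_le_one, fun q hq r s t h _ => ?_⟩, fun q t => by simp⟩
  have hq : (2 : ℝ) ≤ q := by exact_mod_cast hq
  have hm : (0 : ℝ) < (r + s + t : ℕ) := by
    have : 0 < s + t := Nat.pos_of_ne_zero fun h0 => by simp [h0] at h
    exact_mod_cast (by omega : 0 < r + s + t)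
  have hsq : (q : ℝ) ^ 2 ≤ (r + s + t : ℕ) * 2 ^ (r + s + t) := by
    exact_mod_cast (by omega : q ^ 2 ≤ q ^ 2 + q + 1).trans
      (le_add_mul_pow_add_of_le_mul_pow_sub two_pos h)
  have hL : 1 ≤ logb 2 q := (le_logb_iff_rpow_le one_lt_two (by linarith)).2 (by simpa using hq)
  have hbound := sub_logb_le_of_le_logb_add one_lt_two (by linarith) hm
    (two_mul_logb_le_logb_add_of_sq_le (by linarith) hsq)
  push_cast at hbound
  linarith [logb_two_mul_logb_le (by linarith : (1 : ℝ) < q)]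
end

section
/- Let Π be a projective plane of order q, P₀ a point, ℓ₀ a line through P₀. Fix a 'major point' P_i ≠ P₀ on ℓ₀ and a 'major line' ℓ_j ≠ ℓ₀ through P₀. Let A ∪ B be a partition of the q points of ℓ_j \ {P₀} with |A| = ⌊q/2⌋, and let H consist of the points of A together with all lines joining P_i to a point of B. Then |H| = q (if q is even), and for any point Q not on ℓ_j and not equal to P_i: d(Q, H) = 1 if the line P_iQ passes through a point of B, and d(Q, H) = 2 or less otherwise; in particular if Q, Q' are points such that the lines P_iQ and P_iQ' are distinct, exactly one of which joins P_i to B while the other meets ℓ_j in A ∪ {P₀} with Q, Q' ∉ H, then d(Q,H) ≠ d(Q',H). -/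
open Configuration

/-!
Lines through `Pᵢ ∉ ℓ_j` meet `ℓ_j` in distinct points, so `H` has `|A| + |B| = q` elements.
A point `Q ∉ ℓ_j` is not in `H`, and it is adjacent to an element of `H` exactly when its line
to `Pᵢ` is one of the lines of `H`, i.e. meets `ℓ_j` in `B`; otherwise it is still at distance 2
from any point of `A`, which is nonempty since `q ≥ 2`. If `Pᵢ Q'` meets `ℓ_j` in `A ∪ {P₀}`,
no line of `H` passes through `Q'`, which separates `Q'` from a point `Q` on a line of `H`.
-/

section setDist

variable {V : Type*} {G : SimpleGraph V} {v x : V} {S : Set V}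

lemma setDist_le_dist (hx : x ∈ S) : setDist G v S ≤ G.dist v x :=
  Nat.sInf_le ⟨x, hx, rfl⟩

lemma setDist_eq_one_iff (hG : G.Connected) (hv : v ∉ S) :
    setDist G v S = 1 ↔ ∃ x ∈ S, G.Adj v x := by
  constructor
  · intro h
    -- `sInf ∅ = 0`, so `S` is nonempty
    obtain rfl | hS := S.eq_empty_or_nonempty
    · simp [setDist] at h
    obtain ⟨x, hx, hvx⟩ : 1 ∈ G.dist v '' S := h ▸ Nat.sInf_mem (hS.image _)
    exact ⟨x, hx, SimpleGraph.dist_eq_one_iff_adj.mp hvx⟩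
  · rintro ⟨x, hx, hvx⟩
    refine le_antisymm
      ((setDist_le_dist hx).trans_eq (SimpleGraph.dist_eq_one_iff_adj.mpr hvx)) ?_
    refine Nat.one_le_iff_ne_zero.mpr fun h0 => ?_
    obtain ⟨y, hy, hvy⟩ : 0 ∈ G.dist v '' S :=
      h0 ▸ Nat.sInf_mem (⟨_, x, hx, rfl⟩ : (G.dist v '' S).Nonempty)
    exact hv ((hG.dist_eq_zero_iff.mp hvy) ▸ hy)

end setDist

namespace Configuration.ProjectivePlane

variable {P L : Type*} [Membership P L] [ProjectivePlane P L]

theorem exists_mem (l : L) : ∃ p : P, p ∈ l := by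
  obtain ⟨-, p₂, -, -, l₂, -, -, -, -, h₂₂, -, -, -, -⟩ := @exists_config P L _ _
  by_cases h : l = l₂
  · exact ⟨p₂, h ▸ h₂₂⟩
  · exact ⟨_, (HasPoints.mkPoint_ax h).1⟩

theorem eq_of_mem_of_mem {p p' : P} {l l' : L} (hp : p ∈ l) (hp' : p' ∈ l) (hpl' : p ∈ l')
    (hp'l' : p' ∈ l') (h : p ≠ p') : l = l' :=
  (Nondegenerate.eq_or_eq hp hp' hpl' hp'l').resolve_left h

theorem ncard_setOf_mem_ne [Finite P] [Finite L] {p : P} {l : L} (hp : p ∈ l) :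
    {x : P | x ∈ l ∧ x ≠ p}.ncard = order P L := by
  have hl : {x : P | x ∈ l}.ncard = order P L + 1 := pointCount_eq P l
  rw [show {x : P | x ∈ l ∧ x ≠ p} = {x : P | x ∈ l} \ {p} from rfl,
    Set.ncard_sdiff_singleton_of_mem (s := {x : P | x ∈ l}) hp, hl, Nat.add_sub_cancel]

theorem ncard_lines_through_meeting {p : P} {l : L} {S : Set P} (hp : p ∉ l)
    (hS : ∀ s ∈ S, s ∈ l) : {m : L | p ∈ m ∧ ∃ s ∈ S, s ∈ m}.ncard = S.ncard := by
  have hne : ∀ s ∈ S, p ≠ s := fun s hs h => hp (h ▸ hS s hs)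
  symm
  refine Set.ncard_congr (fun s hs => HasLines.mkLine (hne s hs))
    (fun s hs => ⟨(HasLines.mkLine_ax _).1, s, hs, (HasLines.mkLine_ax _).2⟩) ?_ ?_
  · intro s t hs ht hst
    by_contra hne_st
    have hpst := (HasLines.mkLine_ax (L := L) (hne s hs)).1
    have hline : HasLines.mkLine (hne s hs) = l :=
      eq_of_mem_of_mem (HasLines.mkLine_ax _).2 (hst ▸ (HasLines.mkLine_ax _).2) (hS s hs)
        (hS t ht) hne_st
    exact hp (hline ▸ hpst)
  · rintro m ⟨hpm, s, hs, hsm⟩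
    exact ⟨s, hs, eq_of_mem_of_mem (HasLines.mkLine_ax _).1 (HasLines.mkLine_ax _).2 hpm hsm
      (hne s hs)⟩

end Configuration.ProjectivePlane

namespace incGraph

variable {P L : Type*} [Membership P L]

@[simp] lemma adj_inl_inr {p : P} {l : L} : (incGraph P L).Adj (.inl p) (.inr l) ↔ p ∈ l :=
  Iff.rfl

@[simp] lemma adj_inr_inl {p : P} {l : L} : (incGraph P L).Adj (.inr l) (.inl p) ↔ p ∈ l :=
  Iff.rfl

@[simp] lemma not_adj_inl_inl {p p' : P} : ¬ (incGraph P L).Adj (.inl p) (.inl p') :=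
  id

variable [ProjectivePlane P L]

lemma exists_walk_inl_inl (p p' : P) :
    ∃ w : (incGraph P L).Walk (.inl p) (.inl p'), w.length ≤ 2 := by
  by_cases h : p = p'
  · subst h
    exact ⟨.nil, by simp⟩
  · obtain ⟨hp, hp'⟩ := HasLines.mkLine_ax (L := L) h
    exact ⟨(SimpleGraph.Walk.nil.cons (adj_inr_inl.mpr hp')).cons (adj_inl_inr.mpr hp), le_rfl⟩

lemma dist_inl_inl_le_two (p p' : P) : (incGraph P L).dist (.inl p) (.inl p') ≤ 2 :=
  let ⟨w, hw⟩ := exists_walk_inl_inl p p'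
  (SimpleGraph.dist_le w).trans hw

lemma reachable_inl_inl (p p' : P) : (incGraph P L).Reachable (.inl p) (.inl p') :=
  let ⟨w, _⟩ := exists_walk_inl_inl p p'
  ⟨w⟩

lemma reachable_inl (p : P) : ∀ x : P ⊕ L, (incGraph P L).Reachable (.inl p) x
  | .inl p' => reachable_inl_inl p p'
  | .inr l =>
    let ⟨p', hp'⟩ := ProjectivePlane.exists_mem (P := P) l
    (reachable_inl_inl p p').trans (adj_inl_inr.mpr hp').reachable

lemma connected : (incGraph P L).Connected := by
  obtain ⟨p, -⟩ := @ProjectivePlane.exists_config P L _ _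
  have : Nonempty (P ⊕ L) := ⟨.inl p⟩
  exact ⟨fun x y => (reachable_inl p x).symm.trans (reachable_inl p y)⟩

end incGraph

section ZetaSet

variable {P L : Type*} [Membership P L]

def zetaSet (Pᵢ : P) (A B : Set P) : Set (P ⊕ L) :=
  Sum.inl '' A ∪ Sum.inr '' {l : L | Pᵢ ∈ l ∧ ∃ b ∈ B, b ∈ l}

variable {Pᵢ Q : P} {A B : Set P}

@[simp] lemma inl_mem_zetaSet : (Sum.inl Q : P ⊕ L) ∈ zetaSet Pᵢ A B ↔ Q ∈ A := by
  simp [zetaSet]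

@[simp] lemma inr_mem_zetaSet {l : L} :
    (Sum.inr l : P ⊕ L) ∈ zetaSet Pᵢ A B ↔ Pᵢ ∈ l ∧ ∃ b ∈ B, b ∈ l := by
  simp [zetaSet]

variable [ProjectivePlane P L]

lemma ncard_zetaSet [Finite P] [Finite L] {lj : L} (hPᵢ : Pᵢ ∉ lj) (hB : ∀ b ∈ B, b ∈ lj) :
    (zetaSet Pᵢ A B : Set (P ⊕ L)).ncard = A.ncard + B.ncard := by
  rw [zetaSet, Set.ncard_union_eq Set.disjoint_image_inl_image_inr,
    Set.ncard_image_of_injective _ Sum.inl_injective,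
    Set.ncard_image_of_injective _ Sum.inr_injective,
    ProjectivePlane.ncard_lines_through_meeting hPᵢ hB]

lemma setDist_zetaSet_eq_one_iff (hQ : Q ∉ A) :
    setDist (incGraph P L) (.inl Q) (zetaSet Pᵢ A B) = 1 ↔
      ∃ l : L, Pᵢ ∈ l ∧ Q ∈ l ∧ ∃ b ∈ B, b ∈ l := by
  rw [setDist_eq_one_iff incGraph.connected (inl_mem_zetaSet.not.mpr hQ)]
  constructor
  · rintro ⟨a | l, hx, hadj⟩
    · exact absurd hadj incGraph.not_adj_inl_inl
    · exact ⟨l, (inr_mem_zetaSet.mp hx).1, hadj, (inr_mem_zetaSet.mp hx).2⟩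
  · rintro ⟨l, hPᵢl, hQl, hlB⟩
    exact ⟨.inr l, inr_mem_zetaSet.mpr ⟨hPᵢl, hlB⟩, hQl⟩

lemma setDist_zetaSet_le_two {a : P} (ha : a ∈ A) :
    setDist (incGraph P L) (.inl Q) (zetaSet Pᵢ A B) ≤ 2 :=
  (setDist_le_dist (inl_mem_zetaSet.mpr ha)).trans (incGraph.dist_inl_inl_le_two Q a)

end ZetaSet

/-- Properties of a ζ-set `H` built from a major point `P_i`, a major line `ℓ_j`, and a
partition `A ∪ B` of the points of `ℓ_j` other than `P₀` with `|A| = ⌊q/2⌋`: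
its size is `q` when `q` is even, distances of generic points to `H`, and the separation
property for pairs of points whose joining lines with `P_i` behave differently. -/
theorem zeta_set_properties (P L : Type*) [Membership P L] [Fintype P] [Fintype L]
    [ProjectivePlane P L] (q : ℕ) (hq : ProjectivePlane.order P L = q) (h2 : 2 ≤ q)
    (P₀ Pᵢ : P) (ℓ₀ lj : L) (h00 : P₀ ∈ ℓ₀) (hi0 : Pᵢ ∈ ℓ₀) (hiP : Pᵢ ≠ P₀)
    (hj0 : P₀ ∈ lj) (hjl : lj ≠ ℓ₀)
    (A B : Set P) (hAB : A ∪ B = {x : P | x ∈ lj ∧ x ≠ P₀}) (hdisj : Disjoint A B)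
    (hA : A.ncard = q / 2)
    (H : Set (P ⊕ L))
    (hH : H = Sum.inl '' A ∪ Sum.inr '' {l : L | Pᵢ ∈ l ∧ ∃ b ∈ B, b ∈ l}) :
    (Even q → H.ncard = q) ∧
    (∀ Q : P, Q ∉ lj → Q ≠ Pᵢ →
      (((∃ l : L, Pᵢ ∈ l ∧ Q ∈ l ∧ ∃ b ∈ B, b ∈ l) →
          setDist (incGraph P L) (Sum.inl Q) H = 1) ∧
        (¬ (∃ l : L, Pᵢ ∈ l ∧ Q ∈ l ∧ ∃ b ∈ B, b ∈ l) →
          setDist (incGraph P L) (Sum.inl Q) H ≤ 2))) ∧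
    (∀ (Q Q' : P) (m m' : L), Q ≠ Pᵢ → Q' ≠ Pᵢ → m ≠ m' →
      Pᵢ ∈ m → Q ∈ m → Pᵢ ∈ m' → Q' ∈ m' →
      (∃ b ∈ B, b ∈ m) → (∀ x : P, x ∈ m' → x ∈ lj → x ∈ A ∪ {P₀}) →
      Sum.inl Q ∉ H → Sum.inl Q' ∉ H →
      setDist (incGraph P L) (Sum.inl Q) H ≠ setDist (incGraph P L) (Sum.inl Q') H) := by
  replace hH : H = zetaSet Pᵢ A B := hH
  subst hH
  have hPᵢ : Pᵢ ∉ lj := fun h => hjl (ProjectivePlane.eq_of_mem_of_mem hj0 h h00 hi0 hiP.symm)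
  have hA_lj : ∀ a ∈ A, a ∈ lj := fun a ha => (hAB.subset (Or.inl ha)).1
  have hB_lj : ∀ b ∈ B, b ∈ lj ∧ b ≠ P₀ := fun b hb => hAB.subset (Or.inr hb)
  refine ⟨fun _ => ?_, fun Q hQ _ => ⟨?_, fun _ => ?_⟩, ?_⟩
  · have hAB_card := Set.ncard_union_eq hdisj
    rw [hAB, ProjectivePlane.ncard_setOf_mem_ne hj0, hq] at hAB_card
    rw [ncard_zetaSet hPᵢ fun b hb => (hB_lj b hb).1]
    omega
  · exact (setDist_zetaSet_eq_one_iff fun hQA => hQ (hA_lj Q hQA)).mpr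
  · obtain ⟨a, ha⟩ : A.Nonempty := Set.nonempty_of_ncard_ne_zero (by omega)
    exact setDist_zetaSet_le_two ha
  · intro Q Q' m m' _ hQ' _ hPᵢm hQm hPᵢm' hQ'm' hmB hm'A hQA hQ'A hdist
    rw [inl_mem_zetaSet] at hQA hQ'A
    obtain ⟨l, hPᵢl, hQ'l, b, hb, hbl⟩ := (setDist_zetaSet_eq_one_iff hQ'A).mp
      (hdist ▸ (setDist_zetaSet_eq_one_iff hQA).mpr ⟨m, hPᵢm, hQm, hmB⟩)
    obtain rfl : l = m' := ProjectivePlane.eq_of_mem_of_mem hPᵢl hQ'l hPᵢm' hQ'm' hQ'.symm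
    rcases hm'A b hbl (hB_lj b hb).1 with hbA | rfl
    · exact Set.disjoint_left.mp hdisj hbA hb
    · exact (hB_lj b hb).2 rfl
end

section
/- For all integers q ≥ 4 and 1 ≤ k ≤ q, the inequality ((q−k+1)/(q+1))·((q−2)/(2q−2))^k + (k/(q+1))·((q−1)/q)·((q−2)/(2q−2))^{k−1} < (1/2)^k holds. -/
/-!
With `t = (q-2)/(q-1)` we have `(q-2)/(2q-2) = t/2`, so after factoring out `(1/2)^k` the claim
becomes `t^(k-1) · zetaBracket q (k-1) < 1`, the bracket being nonnegative. Bernoulli's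
inequality in the form `(1-x)^n (1+nx) ≤ 1`, applied at `x = 1/(q-1)`, gives
`t^(k-1) ≤ (q-1)/(q+k-2)`; with this value the claim is a polynomial inequality whose slack
is exactly `(3q-2)k > 0`.
-/

open Configuration

theorem one_sub_pow_mul_one_add_mul_le_one {R : Type*} [CommRing R] [LinearOrder R]
    [IsStrictOrderedRing R] {x : R} (hx₀ : 0 ≤ x) (hx₁ : x ≤ 1) (n : ℕ) :
    (1 - x) ^ n * (1 + n * x) ≤ 1 :=
  calc (1 - x) ^ n * (1 + n * x)
      ≤ (1 - x) ^ n * (1 + x) ^ n :=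
        mul_le_mul_of_nonneg_left (one_add_mul_le_pow (by linarith) n)
          (pow_nonneg (sub_nonneg.2 hx₁) n)
    _ = (1 - x ^ 2) ^ n := by rw [← mul_pow]; ring
    _ ≤ 1 := pow_le_one₀ (by nlinarith) (by nlinarith)

theorem sub_two_div_sub_one_pow_le {q : ℝ} (hq : 2 ≤ q) (n : ℕ) :
    ((q - 2) / (q - 1)) ^ n ≤ (q - 1) / (q - 1 + n) := by
  have hq₁ : 0 < q - 1 := by linarith
  have h := one_sub_pow_mul_one_add_mul_le_one (x := 1 / (q - 1)) (by positivity)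
    ((div_le_one hq₁).2 (by linarith)) n
  rw [le_div_iff₀ (by positivity)]
  have e₁ : 1 - 1 / (q - 1) = (q - 2) / (q - 1) := by field_simp; ring
  have e₂ : 1 + n * (1 / (q - 1)) = (q - 1 + n) / (q - 1) := by field_simp
  rw [e₁, e₂, mul_div_assoc', div_le_one hq₁] at h
  exact h

noncomputable def zetaBracket (q m : ℝ) : ℝ :=
  (q - m) / (q + 1) * ((q - 2) / (q - 1)) + 2 * (m + 1) / (q + 1) * ((q - 1) / q)

theorem zetaBracket_nonneg {q m : ℝ} (hq : 2 ≤ q) (hm : 0 ≤ m) (hmq : m ≤ q) :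
    0 ≤ zetaBracket q m := by
  have hq₀ : 0 ≤ q + 1 := by linarith
  have ht : 0 ≤ (q - 2) / (q - 1) := div_nonneg (by linarith) (by linarith)
  have hq₁ : 0 ≤ (q - 1) / q := div_nonneg (by linarith) (by linarith)
  exact add_nonneg (mul_nonneg (div_nonneg (by linarith) hq₀) ht)
    (mul_nonneg (div_nonneg (by linarith) hq₀) hq₁)

theorem sub_one_div_mul_zetaBracket_lt_one {q m : ℝ} (hq : 1 < q) (hm : 0 ≤ m) :
    (q - 1) / (q - 1 + m) * zetaBracket q m < 1 := by
  have hq₁ : 0 < q - 1 := by linarith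
  have slack : q * (q + 1) * (q - 1 + m) - (q * (q - m) * (q - 2) + 2 * (m + 1) * (q - 1) ^ 2)
      = (3 * q - 2) * (m + 1) := by ring
  have h : 1 - (q - 1) / (q - 1 + m) * zetaBracket q m
      = (3 * q - 2) * (m + 1) / (q * (q + 1) * (q - 1 + m)) := by
    rw [zetaBracket, ← slack]; field_simp
  have : 0 < (3 * q - 2) * (m + 1) / (q * (q + 1) * (q - 1 + m)) := by
    apply div_pos <;> nlinarith
  linarith

theorem zeta_scaled_lt_one {q : ℝ} {k : ℕ} (hq : 2 ≤ q) (hk : 1 ≤ k) (hkq : (k : ℝ) ≤ q) :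
    (q - k + 1) / (q + 1) * ((q - 2) / (q - 1)) ^ k
      + 2 * k / (q + 1) * ((q - 1) / q) * ((q - 2) / (q - 1)) ^ (k - 1) < 1 := by
  obtain ⟨m, rfl⟩ := Nat.exists_eq_add_of_le' hk
  push_cast at hkq ⊢
  calc (q - (m + 1) + 1) / (q + 1) * ((q - 2) / (q - 1)) ^ (m + 1)
        + 2 * (m + 1) / (q + 1) * ((q - 1) / q) * ((q - 2) / (q - 1)) ^ m
      = ((q - 2) / (q - 1)) ^ m * zetaBracket q m := by rw [zetaBracket]; ring
    _ ≤ (q - 1) / (q - 1 + m) * zetaBracket q m :=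
        mul_le_mul_of_nonneg_right (sub_two_div_sub_one_pow_le hq m)
          (zetaBracket_nonneg hq m.cast_nonneg (by linarith))
    _ < 1 := sub_one_div_mul_zetaBracket_lt_one (by linarith) m.cast_nonneg

/-- The elementary inequality from the probabilistic separation argument: for integers
`q ≥ 4` and `1 ≤ k ≤ q`,
`((q−k+1)/(q+1))·((q−2)/(2q−2))^k + (k/(q+1))·((q−1)/q)·((q−2)/(2q−2))^{k−1} < (1/2)^k`. -/
theorem zeta_probability_inequality (q k : ℕ) (hq : 4 ≤ q) (hk : 1 ≤ k) (hkq : k ≤ q) :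
    ((q : ℝ) - k + 1) / (q + 1) * (((q : ℝ) - 2) / (2 * q - 2)) ^ k
      + (k : ℝ) / (q + 1) * (((q : ℝ) - 1) / q * (((q : ℝ) - 2) / (2 * q - 2)) ^ (k - 1))
      < (1 / 2 : ℝ) ^ k := by
  have halve : ((q : ℝ) - 2) / (2 * q - 2) = (q - 2) / (q - 1) / 2 := by
    rw [div_div]; ring_nf
  have halve_pow : (((q : ℝ) - 2) / (2 * q - 2)) ^ (k - 1)
      = 2 / 2 ^ k * ((q - 2) / (q - 1)) ^ (k - 1) := by
    obtain ⟨m, rfl⟩ := Nat.exists_eq_add_of_le' hk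
    rw [halve, Nat.add_sub_cancel, div_pow, pow_succ]
    field_simp
  have scaled := zeta_scaled_lt_one (q := q) (by exact_mod_cast (by omega : 2 ≤ q)) hk
    (by exact_mod_cast hkq)
  rw [halve_pow, halve, div_pow, one_div_pow]
  refine lt_of_eq_of_lt ?_ (mul_lt_of_lt_one_right (by positivity : (0 : ℝ) < 1 / 2 ^ k) scaled)
  ring
end
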